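/- Let M be a stochastic matrix on a finite alphabet A defining an ergodic (irreducible and aperiodic) Markov chain, let λ₂(M) be an eigenvalue of M of second largest absolute value, and let b ≥ 2 be an integer with b·|λ₂(M)|² > 1. Then the reconstruction problem for the b-ary tree T_b and M is census solvable (and in particular solvable). -/

import Mathlib

open Filter

/-- The distribution of the configuration at level `n` of the `b`-ary tree,
for the broadcast process with channel `M`, given that the root has value `i`.
Vertices at level `n` are encoded as paths `Fin n → Fin b`. -/
noncomputable def levelDist {A : Type} [Fintype A] [DecidableEq A]
    (M : A → A → ℝ) (b : ℕ) (i : A) : (n : ℕ) → ((Fin n → Fin b) → A) → ℝ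
  | 0 => fun σ => if σ = (fun _ => i) then 1 else 0
  | n + 1 => fun τ => ∑ σ : (Fin n → Fin b) → A, levelDist M b i n σ *
      ∏ w : Fin (n + 1) → Fin b, M (σ fun m => w m.castSucc) (τ w)

/-- Total variation distance between two (densities of) probability measures
on a finite set. -/
noncomputable def tvDist {Ω : Type*} [Fintype Ω] (P Q : Ω → ℝ) : ℝ :=
  (1 / 2) * ∑ σ, |P σ - Q σ|

/-- The census of a configuration: the number of vertices carrying each symbol. -/
def census {A : Type} [Fintype A] [DecidableEq A] {b n : ℕ}
    (σ : (Fin n → Fin b) → A) : A → ℕ :=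
  fun j => (Finset.univ.filter fun p => σ p = j).card

/-- The distribution of the census of level `n`, given that the root has value `i`. -/
noncomputable def censusDist {A : Type} [Fintype A] [DecidableEq A]
    (M : A → A → ℝ) (b : ℕ) (i : A) (n : ℕ) (c : A → ℕ) : ℝ :=
  ∑ σ : (Fin n → Fin b) → A, if census σ = c then levelDist M b i n σ else 0

/-- Total variation distance between the census distributions at level `n`
given root values `i` and `j`. -/
noncomputable def censusTV {A : Type} [Fintype A] [DecidableEq A]
    (M : A → A → ℝ) (b : ℕ) (i j : A) (n : ℕ) : ℝ :=
  (1 / 2) * ∑' c : A → ℕ, |censusDist M b i n c - censusDist M b j n c|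

/-- The `m`-step transition probabilities of the channel `M`. -/
noncomputable def stepPow {A : Type} [Fintype A] [DecidableEq A]
    (M : A → A → ℝ) : ℕ → A → A → ℝ
  | 0 => fun i j => if i = j then 1 else 0
  | m + 1 => fun i j => ∑ k, stepPow M m i k * M k j

/-- `M` defines an ergodic (irreducible and aperiodic) markov chain: some power
of the transition matrix has all entries positive. -/
def IsErgodic {A : Type} [Fintype A] [DecidableEq A] (M : A → A → ℝ) : Prop :=
  ∃ m : ℕ, ∀ i j : A, 0 < stepPow M m i j

/-- `lam` is a (possibly complex) eigenvalue of the transition matrix of `M`. -/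
def IsEigenvalue {A : Type} [Fintype A] (M : A → A → ℝ) (lam : ℂ) : Prop :=
  ∃ v : A → ℂ, v ≠ 0 ∧ ∀ i, ∑ j, (M i j : ℂ) * v j = lam * v i

/-! The Kesten–Stigum second-moment argument. Let `v` be an eigenvector of `M` for `λ ≠ 1`; it is
not constant, say `v i ≠ v j`. The statistic `Sₙ = ∑_{w ∈ Lₙ} v(σ_w)` is a function of the census,
its conditional mean given the root `ρ` is `(bλ)ⁿ v(ρ)`, and the independence of the children gives
`E|Sₙ₊₁|² ≤ b²|λ|² E|Sₙ|² + bⁿ⁺¹ ∑ₐ |v a|²`, so `E|Sₙ|² = O((b²|λ|²)ⁿ)` once `b|λ|² > 1`.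
Cauchy–Schwarz then bounds the census total variation between the roots `i` and `j` below by a
positive constant independent of `n`; the full total variation is at least as large. Both are
non-increasing in `n`, since level `n + 1` is obtained from level `n` by a Markov kernel and, the
kernel being invariant under relabelling the vertices of level `n`, so is its census from the census
of level `n`. Hence both converge to positive limits. -/

open Finset Filter ComplexConjugate

namespace Broadcast

section ProductWeights

variable {ι α R : Type*} [Fintype ι] [DecidableEq ι] [Fintype α] [CommSemiring R]

lemma sum_prod_mul_prod (f h : ι → α → R) :
    ∑ τ : ι → α, (∏ w, f w (τ w)) * ∏ w, h w (τ w) = ∏ w, ∑ a, f w a * h w a := by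
  simp_rw [← prod_mul_distrib]
  exact (Fintype.prod_sum fun w a => f w a * h w a).symm

lemma sum_prod_mul_apply {f : ι → α → R}
    (hf : ∀ w, ∑ a, f w a = 1) (w₀ : ι) (g : α → R) :
    ∑ τ : ι → α, (∏ w, f w (τ w)) * g (τ w₀) = ∑ a, f w₀ a * g a := by
  have key := sum_prod_mul_prod f fun w a => if w = w₀ then g a else 1
  simp only [Fintype.prod_ite_eq'] at key
  rw [key, Fintype.prod_eq_single w₀ fun w hw => by simp [hw, hf]]
  simp

lemma sum_prod_mul_apply_mul_apply {f : ι → α → R}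
    (hf : ∀ w, ∑ a, f w a = 1) {w₀ w₁ : ι} (hne : w₀ ≠ w₁) (g h : α → R) :
    ∑ τ : ι → α, (∏ w, f w (τ w)) * (g (τ w₀) * h (τ w₁))
      = (∑ a, f w₀ a * g a) * ∑ a, f w₁ a * h a := by
  let k : ι → α → R := fun w a => if w = w₀ then g a else if w = w₁ then h a else 1
  have hk : ∀ τ : ι → α, ∏ w, k w (τ w) = g (τ w₀) * h (τ w₁) := fun τ => by
    rw [Fintype.prod_eq_mul w₀ w₁ hne fun w hw => by simp [k, hw]]
    simp [k, hne.symm]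
  have key := sum_prod_mul_prod f k
  rw [Fintype.prod_eq_mul w₀ w₁ hne fun w hw => by simp [k, hw, hf]] at key
  simpa [k, hk, hne.symm] using key

lemma sum_prod_mul_norm_sum_sq {f : ι → α → ℝ} (hf : ∀ w, ∑ a, f w a = 1) (g : α → ℂ) :
    ∑ τ : ι → α, (∏ w, f w (τ w)) * ‖∑ w, g (τ w)‖ ^ 2
      = ‖∑ w, ∑ a, (f w a : ℂ) * g a‖ ^ 2
        + ∑ w, (∑ a, f w a * ‖g a‖ ^ 2 - ‖∑ a, (f w a : ℂ) * g a‖ ^ 2) := by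
  set m : ι → ℂ := fun w => ∑ a, (f w a : ℂ) * g a
  have hF : ∀ w, ∑ a, (f w a : ℂ) = 1 := fun w => by exact_mod_cast hf w
  have hconj : ∀ w, ∑ a, (f w a : ℂ) * conj (g a) = conj (m w) := fun w => by
    simp [m, map_sum, Complex.conj_ofReal]
  have cross : ∀ w₀ w₁, ∑ τ : ι → α, (∏ w, (f w (τ w) : ℂ)) * (g (τ w₀) * conj (g (τ w₁)))
      = m w₀ * conj (m w₁)
        + if w₀ = w₁ then ∑ a, (f w₀ a : ℂ) * (g a * conj (g a)) - m w₀ * conj (m w₀) else 0 := by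
    intro w₀ w₁
    by_cases hw : w₀ = w₁
    · subst hw
      rw [sum_prod_mul_apply hF w₀ fun a => g a * conj (g a), if_pos rfl]
      ring
    · rw [sum_prod_mul_apply_mul_apply hF hw g fun a => conj (g a), if_neg hw, add_zero]
      exact congrArg _ (hconj w₁)
  apply Complex.ofReal_injective
  calc _ = ∑ τ : ι → α, (∏ w, (f w (τ w) : ℂ)) * ((∑ w, g (τ w)) * conj (∑ w, g (τ w))) := by
        push_cast
        simp_rw [Complex.mul_conj']
    _ = ∑ w₀, ∑ w₁, ∑ τ : ι → α, (∏ w, (f w (τ w) : ℂ)) * (g (τ w₀) * conj (g (τ w₁))) := by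
        simp_rw [map_sum, sum_mul_sum, mul_sum]
        rw [sum_comm]
        exact sum_congr rfl fun _ _ => sum_comm
    _ = (∑ w, m w) * conj (∑ w, m w)
          + ∑ w, (∑ a, (f w a : ℂ) * (g a * conj (g a)) - m w * conj (m w)) := by
        simp_rw [cross, sum_add_distrib, sum_ite_eq, if_pos (mem_univ _), map_sum, sum_mul_sum]
    _ = _ := by
        simp_rw [Complex.mul_conj']
        push_cast
        rfl

end ProductWeights

lemma sum_abs_sum_mul_le {α β : Type*} (s : Finset α) (t : Finset β) (d : α → ℝ)
    (K : α → β → ℝ) (hK : ∀ a ∈ s, ∀ b ∈ t, 0 ≤ K a b) (hK1 : ∀ a ∈ s, ∑ b ∈ t, K a b ≤ 1) :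
    ∑ b ∈ t, |∑ a ∈ s, d a * K a b| ≤ ∑ a ∈ s, |d a| :=
  calc ∑ b ∈ t, |∑ a ∈ s, d a * K a b|
      ≤ ∑ b ∈ t, ∑ a ∈ s, |d a| * K a b := sum_le_sum fun b hb =>
        (abs_sum_le_sum_abs _ _).trans_eq <| sum_congr rfl fun a ha => by
          rw [abs_mul, abs_of_nonneg (hK a ha b hb)]
    _ = ∑ a ∈ s, |d a| * ∑ b ∈ t, K a b := by rw [sum_comm]; simp_rw [mul_sum]
    _ ≤ ∑ a ∈ s, |d a| := sum_le_sum fun a ha =>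
        mul_le_of_le_one_right (abs_nonneg _) (hK1 a ha)

lemma norm_sum_sub_smul_sq_le {γ E : Type*} [SeminormedAddCommGroup E] [NormedSpace ℝ E]
    (s : Finset γ) {P Q : γ → ℝ} (hP : ∀ c ∈ s, 0 ≤ P c) (hQ : ∀ c ∈ s, 0 ≤ Q c) (T : γ → E) :
    ‖∑ c ∈ s, (P c - Q c) • T c‖ ^ 2
      ≤ (∑ c ∈ s, |P c - Q c|) * ∑ c ∈ s, (P c + Q c) * ‖T c‖ ^ 2 :=
  calc ‖∑ c ∈ s, (P c - Q c) • T c‖ ^ 2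
      ≤ (∑ c ∈ s, |P c - Q c| * ‖T c‖) ^ 2 := by
        gcongr
        exact (norm_sum_le _ _).trans_eq (by simp_rw [norm_smul, Real.norm_eq_abs])
    _ ≤ (∑ c ∈ s, |P c - Q c|) * ∑ c ∈ s, |P c - Q c| * ‖T c‖ ^ 2 :=
        sum_sq_le_sum_mul_sum_of_sq_le_mul s (fun _ _ => abs_nonneg _)
          (fun _ _ => by positivity) fun _ _ => le_of_eq (by ring)
    _ ≤ (∑ c ∈ s, |P c - Q c|) * ∑ c ∈ s, (P c + Q c) * ‖T c‖ ^ 2 := by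
        gcongr with c hc
        exact abs_sub_le_iff.2 ⟨by linarith [hQ c hc], by linarith [hP c hc]⟩

lemma le_mul_pow_of_le_mul_add_pow {x : ℕ → ℝ} {b q C : ℝ} (hb : 0 ≤ b) (hq : 1 < q)
    (hC : 0 ≤ C) (h₀ : x 0 ≤ C) (hsucc : ∀ n, x (n + 1) ≤ b * q * x n + C * b ^ (n + 1))
    (n : ℕ) : x n ≤ C * q / (q - 1) * (b * q) ^ n := by
  have hq' : 0 < q - 1 := sub_pos.2 hq
  -- subtracting `C / (q - 1) * b ^ n` makes the induction close
  have key : ∀ n, x n ≤ C * q / (q - 1) * (b * q) ^ n - C / (q - 1) * b ^ n := by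
    intro n
    induction n with
    | zero => field_simp; linarith
    | succ n ih =>
      calc x (n + 1) ≤ b * q * x n + C * b ^ (n + 1) := hsucc n
        _ ≤ b * q * (C * q / (q - 1) * (b * q) ^ n - C / (q - 1) * b ^ n) + C * b ^ (n + 1) := by
          gcongr
        _ = _ := by field_simp; ring
  exact (key n).trans (sub_le_self _ (by positivity))

lemma sum_comp_init {E : Type*} [AddCommMonoid E] {b n : ℕ} (F : (Fin n → Fin b) → E) :
    ∑ w : Fin (n + 1) → Fin b, F (Fin.init w) = b • ∑ p, F p := by
  rw [← (Fin.snocEquiv fun _ => Fin b).sum_comp, Fintype.sum_prod_type]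
  have hinit : ∀ x (p : Fin n → Fin b), Fin.init ((Fin.snocEquiv fun _ => Fin b) (x, p)) = p :=
    fun x p => Fin.init_snoc (α := fun _ => Fin b) x p
  simp [hinit]

lemma exists_pos_tendsto_of_antitone {u : ℕ → ℝ} (hu : Antitone u) {c : ℝ} (hc : 0 < c)
    (hle : ∀ n, c ≤ u n) : ∃ L > 0, Tendsto u atTop (nhds L) :=
  ⟨⨅ n, u n, hc.trans_le (le_ciInf hle),
    tendsto_atTop_ciInf hu ⟨c, Set.forall_mem_range.2 hle⟩⟩

variable {A : Type} {M : A → A → ℝ} {b : ℕ} {v : A → ℂ} {lam : ℂ}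

noncomputable def levelKernel (M : A → A → ℝ) (b n : ℕ) (σ : (Fin n → Fin b) → A)
    (τ : (Fin (n + 1) → Fin b) → A) : ℝ :=
  ∏ w, M (σ (Fin.init w)) (τ w)

lemma levelKernel_nonneg (hnn : ∀ i j, 0 ≤ M i j) {n : ℕ} (σ : (Fin n → Fin b) → A)
    (τ : (Fin (n + 1) → Fin b) → A) : 0 ≤ levelKernel M b n σ τ :=
  prod_nonneg fun _ _ => hnn _ _

def levelSum (v : A → ℂ) {n : ℕ} (σ : (Fin n → Fin b) → A) : ℂ :=
  ∑ w, v (σ w)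

variable [Fintype A]

lemma sum_levelKernel (hrow : ∀ i, ∑ j, M i j = 1) {n : ℕ} (σ : (Fin n → Fin b) → A) :
    ∑ τ, levelKernel M b n σ τ = 1 := by
  simp only [levelKernel]
  rw [← Fintype.prod_sum fun (w : Fin (n + 1) → Fin b) a => M (σ (Fin.init w)) a]
  simp [hrow]

lemma sum_levelKernel_smul_levelSum (hrow : ∀ i, ∑ j, M i j = 1)
    (hv : ∀ i, ∑ j, (M i j : ℂ) * v j = lam * v i) {n : ℕ} (σ : (Fin n → Fin b) → A) :
    ∑ τ, levelKernel M b n σ τ • levelSum v τ = (b * lam) * levelSum v σ := by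
  have hf : ∀ w : Fin (n + 1) → Fin b, ∑ a, (M (σ (Fin.init w)) a : ℂ) = 1 := fun w => by
    exact_mod_cast hrow _
  simp_rw [levelSum, smul_sum, Complex.real_smul, levelKernel, Complex.ofReal_prod]
  rw [sum_comm]
  simp_rw [sum_prod_mul_apply hf, hv, ← mul_sum, sum_comp_init fun p => v (σ p), nsmul_eq_mul]
  ring

lemma sum_levelKernel_mul_norm_levelSum_sq_le (hnn : ∀ i j, 0 ≤ M i j)
    (hrow : ∀ i, ∑ j, M i j = 1) (hv : ∀ i, ∑ j, (M i j : ℂ) * v j = lam * v i) {n : ℕ}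
    (σ : (Fin n → Fin b) → A) :
    ∑ τ, levelKernel M b n σ τ * ‖levelSum v τ‖ ^ 2
      ≤ (b * ‖lam‖) ^ 2 * ‖levelSum v σ‖ ^ 2 + b ^ (n + 1) * ∑ a, ‖v a‖ ^ 2 := by
  have hM1 : ∀ i j, M i j ≤ 1 := fun i j =>
    (single_le_sum (fun k _ => hnn i k) (mem_univ j)).trans_eq (hrow i)
  have key := sum_prod_mul_norm_sum_sq
    (f := fun (w : Fin (n + 1) → Fin b) a => M (σ (Fin.init w)) a) (fun _ => hrow _) v
  simp only [hv, ← mul_sum, sum_comp_init fun p => v (σ p)] at key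
  simp only [levelKernel, levelSum]
  rw [key]
  gcongr ?_ + ?_
  · refine le_of_eq ?_
    rw [norm_mul, nsmul_eq_mul, norm_mul, Complex.norm_natCast]
    ring
  · calc _ ≤ ∑ _w : Fin (n + 1) → Fin b, ∑ a, ‖v a‖ ^ 2 := sum_le_sum fun w _ =>
          (sub_le_self _ (sq_nonneg _)).trans <| sum_le_sum fun a _ =>
            mul_le_of_le_one_left (sq_nonneg _) (hM1 _ _)
      _ = _ := by simp

lemma exists_ne_of_eigenvector_of_ne_one (hrow : ∀ i, ∑ j, M i j = 1)
    (hv0 : v ≠ 0) (hv : ∀ i, ∑ j, (M i j : ℂ) * v j = lam * v i) (hlam : lam ≠ 1) :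
    ∃ i j, v i ≠ v j := by
  by_contra! hconst
  obtain ⟨i, hi⟩ := Function.ne_iff.1 hv0
  refine hlam (mul_right_cancel₀ hi ?_)
  rw [← hv, one_mul]
  simp_rw [hconst _ i, ← sum_mul, ← Complex.ofReal_sum, hrow, Complex.ofReal_one, one_mul]

variable [DecidableEq A]

lemma levelDist_succ (i : A) (n : ℕ) (τ : (Fin (n + 1) → Fin b) → A) :
    levelDist M b i (n + 1) τ = ∑ σ, levelDist M b i n σ * levelKernel M b n σ τ :=
  rfl

lemma levelDist_nonneg (hnn : ∀ i j, 0 ≤ M i j) (i : A) :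
    ∀ n (σ : (Fin n → Fin b) → A), 0 ≤ levelDist M b i n σ
  | 0, σ => by unfold levelDist; positivity
  | n + 1, τ => sum_nonneg fun σ _ =>
      mul_nonneg (levelDist_nonneg hnn i n σ) (levelKernel_nonneg hnn σ τ)

lemma sum_levelDist_zero_smul {E : Type*} [AddCommMonoid E] [Module ℝ E] (i : A)
    (F : ((Fin 0 → Fin b) → A) → E) : ∑ σ, levelDist M b i 0 σ • F σ = F fun _ => i := by
  simp [levelDist, ite_smul]

lemma sum_levelDist_succ_smul {E : Type*} [AddCommMonoid E] [Module ℝ E] (i : A) (n : ℕ)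
    (F : ((Fin (n + 1) → Fin b) → A) → E) :
    ∑ τ, levelDist M b i (n + 1) τ • F τ
      = ∑ σ, levelDist M b i n σ • ∑ τ, levelKernel M b n σ τ • F τ := by
  simp_rw [levelDist_succ, sum_smul, smul_sum, mul_smul]
  exact sum_comm

lemma sum_levelDist (hrow : ∀ i, ∑ j, M i j = 1) (i : A) :
    ∀ n, ∑ σ : (Fin n → Fin b) → A, levelDist M b i n σ = 1
  | 0 => by simpa using sum_levelDist_zero_smul (M := M) (b := b) i fun _ => (1 : ℝ)
  | n + 1 => by
    simpa [sum_levelKernel hrow, sum_levelDist hrow i n] using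
      sum_levelDist_succ_smul (M := M) (b := b) i n fun _ => (1 : ℝ)

lemma tvDist_levelDist_succ_le (hnn : ∀ i j, 0 ≤ M i j) (hrow : ∀ i, ∑ j, M i j = 1)
    (i j : A) (n : ℕ) :
    tvDist (levelDist M b i (n + 1)) (levelDist M b j (n + 1))
      ≤ tvDist (levelDist M b i n) (levelDist M b j n) := by
  unfold tvDist
  gcongr
  simp_rw [levelDist_succ, ← sum_sub_distrib, ← sub_mul]
  exact sum_abs_sum_mul_le _ _ _ _ (fun σ _ τ _ => levelKernel_nonneg hnn σ τ)
    fun σ _ => (sum_levelKernel hrow σ).le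

lemma sum_levelDist_smul_levelSum (hrow : ∀ i, ∑ j, M i j = 1)
    (hv : ∀ i, ∑ j, (M i j : ℂ) * v j = lam * v i) (i : A) :
    ∀ n, ∑ σ, levelDist M b i n σ • levelSum v σ = (b * lam) ^ n * v i
  | 0 => by rw [sum_levelDist_zero_smul]; simp [levelSum]
  | n + 1 => by
    rw [sum_levelDist_succ_smul, sum_congr rfl fun σ _ => by
      rw [sum_levelKernel_smul_levelSum hrow hv σ, ← mul_smul_comm],
      ← mul_sum, sum_levelDist_smul_levelSum hrow hv i n]
    ring

lemma sum_levelDist_mul_norm_levelSum_sq_le (hnn : ∀ i j, 0 ≤ M i j)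
    (hrow : ∀ i, ∑ j, M i j = 1) (hv : ∀ i, ∑ j, (M i j : ℂ) * v j = lam * v i)
    (hlam : 1 < b * ‖lam‖ ^ 2) (i : A) (n : ℕ) :
    ∑ σ, levelDist M b i n σ * ‖levelSum v σ‖ ^ 2
      ≤ (∑ a, ‖v a‖ ^ 2) * (b * ‖lam‖ ^ 2) / (b * ‖lam‖ ^ 2 - 1)
        * (b * (b * ‖lam‖ ^ 2)) ^ n := by
  refine le_mul_pow_of_le_mul_add_pow
    (x := fun n => ∑ σ, levelDist M b i n σ * ‖levelSum v σ‖ ^ 2) (Nat.cast_nonneg b) hlam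
    (sum_nonneg fun _ _ => sq_nonneg _) ?_ (fun n => ?_) n
  · simpa [← smul_eq_mul, sum_levelDist_zero_smul, levelSum] using
      single_le_sum (fun a _ => sq_nonneg ‖v a‖) (mem_univ i)
  · simp only [← smul_eq_mul (a := levelDist M b i _ _), sum_levelDist_succ_smul]
    calc _ ≤ ∑ σ, levelDist M b i n σ
            * ((b * ‖lam‖) ^ 2 * ‖levelSum v σ‖ ^ 2 + b ^ (n + 1) * ∑ a, ‖v a‖ ^ 2) :=
          sum_le_sum fun σ _ => mul_le_mul_of_nonneg_left
            (sum_levelKernel_mul_norm_levelSum_sq_le hnn hrow hv σ) (levelDist_nonneg hnn i n σ)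
      _ = (b * ‖lam‖) ^ 2 * ∑ σ, levelDist M b i n σ * ‖levelSum v σ‖ ^ 2
            + b ^ (n + 1) * ∑ a, ‖v a‖ ^ 2 := by
          simp_rw [mul_add, sum_add_distrib, ← sum_mul, sum_levelDist hrow, one_mul, mul_sum]
          congr 1
          exact sum_congr rfl fun _ _ => by ring
      _ = _ := by simp only [smul_eq_mul]; ring

def censusSupport (A : Type) [Fintype A] [DecidableEq A] (b n : ℕ) : Finset (A → ℕ) :=
  univ.image (census (A := A) (b := b) (n := n))

lemma census_mem_censusSupport {n : ℕ} (σ : (Fin n → Fin b) → A) :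
    census σ ∈ censusSupport A b n :=
  mem_image_of_mem _ (mem_univ σ)

lemma censusDist_eq_sum_filter (i : A) (n : ℕ) (c : A → ℕ) :
    censusDist M b i n c = ∑ σ with census σ = c, levelDist M b i n σ :=
  (sum_filter _ _).symm

lemma censusDist_nonneg (hnn : ∀ i j, 0 ≤ M i j) (i : A) (n : ℕ) (c : A → ℕ) :
    0 ≤ censusDist M b i n c := by
  rw [censusDist_eq_sum_filter]
  exact sum_nonneg fun σ _ => levelDist_nonneg hnn i n σ

lemma censusTV_eq_sum (i j : A) (n : ℕ) :
    censusTV M b i j n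
      = 1 / 2 * ∑ c ∈ censusSupport A b n, |censusDist M b i n c - censusDist M b j n c| := by
  rw [censusTV, tsum_eq_sum fun c hc => ?_]
  have hzero : ∀ l, censusDist M b l n c = 0 := fun l => by
    refine sum_eq_zero fun σ _ => if_neg fun h => hc ?_
    exact h ▸ census_mem_censusSupport σ
  simp [hzero]

lemma sum_censusDist_smul {E : Type*} [AddCommMonoid E] [Module ℝ E] (i : A) (n : ℕ)
    (h : (A → ℕ) → E) :
    ∑ c ∈ censusSupport A b n, censusDist M b i n c • h c
      = ∑ σ, levelDist M b i n σ • h (census σ) := by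
  simp_rw [censusDist_eq_sum_filter, sum_smul]
  rw [← sum_fiberwise_of_maps_to fun σ _ => census_mem_censusSupport σ]
  exact sum_congr rfl fun c _ => sum_congr rfl fun σ hσ => by rw [(mem_filter.1 hσ).2]

lemma censusTV_le_tvDist (i j : A) (n : ℕ) :
    censusTV M b i j n ≤ tvDist (levelDist M b i n) (levelDist M b j n) := by
  rw [censusTV_eq_sum, tvDist]
  gcongr
  have hsub : ∀ c, censusDist M b i n c - censusDist M b j n c
      = ∑ σ, (levelDist M b i n σ - levelDist M b j n σ) * if census σ = c then 1 else 0 := by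
    intro c
    simp only [censusDist, ← sum_sub_distrib, mul_ite, mul_one, mul_zero]
    exact sum_congr rfl fun σ _ => by split_ifs <;> simp
  simp_rw [hsub]
  refine sum_abs_sum_mul_le _ _ _ _ (fun _ _ _ _ => by positivity) fun σ _ => ?_
  rw [sum_ite_eq, if_pos (census_mem_censusSupport σ)]

def censusSum (v : A → ℂ) (c : A → ℕ) : ℂ :=
  ∑ a, (c a : ℂ) * v a

lemma levelSum_eq_censusSum (v : A → ℂ) {n : ℕ} (σ : (Fin n → Fin b) → A) :
    levelSum v σ = censusSum v (census σ) := by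
  rw [levelSum, ← sum_fiberwise' univ σ v]
  simp [censusSum, census]

lemma norm_sub_sq_le_censusTV (hnn : ∀ i j, 0 ≤ M i j)
    (hrow : ∀ i, ∑ j, M i j = 1) (hv : ∀ i, ∑ j, (M i j : ℂ) * v j = lam * v i)
    (hlam : 1 < b * ‖lam‖ ^ 2) (i j : A) (n : ℕ) :
    ‖v i - v j‖ ^ 2
      ≤ 4 * ((∑ a, ‖v a‖ ^ 2) * (b * ‖lam‖ ^ 2) / (b * ‖lam‖ ^ 2 - 1)) * censusTV M b i j n := by
  set K := (∑ a, ‖v a‖ ^ 2) * (b * ‖lam‖ ^ 2) / (b * ‖lam‖ ^ 2 - 1)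
  set B : ℝ := b * (b * ‖lam‖ ^ 2)
  have hB : 0 < B := mul_pos
    (pos_of_mul_pos_left (one_pos.trans hlam) (sq_nonneg _)) (one_pos.trans hlam)
  have hmean : ∑ c ∈ censusSupport A b n,
      (censusDist M b i n c - censusDist M b j n c) • censusSum v c
        = ((b : ℂ) * lam) ^ n * (v i - v j) := by
    simp_rw [sub_smul, sum_sub_distrib, sum_censusDist_smul, ← levelSum_eq_censusSum,
      sum_levelDist_smul_levelSum hrow hv, mul_sub]
  have hnorm : ‖((b : ℂ) * lam) ^ n‖ ^ 2 = B ^ n := by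
    rw [norm_pow, ← pow_mul, mul_comm, pow_mul, norm_mul, Complex.norm_natCast]
    ring
  have hsecond : ∀ l, ∑ c ∈ censusSupport A b n, censusDist M b l n c * ‖censusSum v c‖ ^ 2
      ≤ K * B ^ n := fun l => by
    simp_rw [← smul_eq_mul (a := censusDist M b l n _), sum_censusDist_smul, smul_eq_mul,
      ← levelSum_eq_censusSum]
    exact sum_levelDist_mul_norm_levelSum_sq_le hnn hrow hv hlam l n
  have cs := norm_sum_sub_smul_sq_le (censusSupport A b n)
    (fun c _ => censusDist_nonneg (b := b) hnn i n c)
    (fun c _ => censusDist_nonneg (b := b) hnn j n c) (censusSum v)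
  rw [hmean, norm_mul, mul_pow, hnorm] at cs
  simp_rw [add_mul, sum_add_distrib] at cs
  rw [← mul_le_mul_iff_right₀ (pow_pos hB n)]
  calc B ^ n * ‖v i - v j‖ ^ 2
      ≤ (∑ c ∈ censusSupport A b n, |censusDist M b i n c - censusDist M b j n c|)
        * (K * B ^ n + K * B ^ n) := cs.trans <| by gcongr; exacts [hsecond i, hsecond j]
    _ = _ := by rw [censusTV_eq_sum]; ring

lemma exists_pos_forall_le_censusTV (hnn : ∀ i j, 0 ≤ M i j) (hrow : ∀ i, ∑ j, M i j = 1)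
    (hv : ∀ i, ∑ j, (M i j : ℂ) * v j = lam * v i) (hlam : 1 < b * ‖lam‖ ^ 2) {i j : A}
    (hij : v i ≠ v j) : ∃ c > 0, ∀ n, c ≤ censusTV M b i j n := by
  obtain ⟨a, ha⟩ : ∃ a, v a ≠ 0 := by
    by_contra! h0
    exact hij (by rw [h0, h0])
  have hC : 0 < ∑ a, ‖v a‖ ^ 2 :=
    sum_pos' (fun _ _ => sq_nonneg _) ⟨a, mem_univ a, pow_pos (norm_pos_iff.2 ha) 2⟩
  have hK : 0 < 4 * ((∑ a, ‖v a‖ ^ 2) * (b * ‖lam‖ ^ 2) / (b * ‖lam‖ ^ 2 - 1)) := by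
    have := sub_pos.2 hlam
    positivity
  refine ⟨‖v i - v j‖ ^ 2 / _, div_pos (pow_pos (norm_pos_iff.2 (sub_ne_zero.2 hij)) 2) hK,
    fun n => (div_le_iff₀' hK).2 ?_⟩
  exact norm_sub_sq_le_censusTV hnn hrow hv hlam i j n

lemma census_comp_perm {n : ℕ} (τ : (Fin n → Fin b) → A) (Ψ : Equiv.Perm (Fin n → Fin b)) :
    census (τ ∘ Ψ) = census τ := by
  funext a
  simp only [census, ← Fintype.card_subtype]
  exact Fintype.card_congr (Ψ.subtypeEquiv fun _ => Iff.rfl)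

lemma exists_perm_comp_eq_of_census_eq {n : ℕ} {σ σ' : (Fin n → Fin b) → A}
    (h : census σ = census σ') : ∃ π : Equiv.Perm (Fin n → Fin b), σ ∘ π = σ' := by
  have hcard : ∀ a, Fintype.card {x // σ' x = a} = Fintype.card {x // σ x = a} := fun a => by
    simpa only [census, Fintype.card_subtype] using (congrFun h a).symm
  exact ⟨Equiv.ofFiberEquiv fun a => Fintype.equivOfCardEq (hcard a),
    funext (Equiv.ofFiberEquiv_map _)⟩

noncomputable def levelCensusKernel (M : A → A → ℝ) (b n : ℕ) (σ : (Fin n → Fin b) → A)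
    (c : A → ℕ) : ℝ :=
  ∑ τ with census τ = c, levelKernel M b n σ τ

lemma levelCensusKernel_nonneg (hnn : ∀ i j, 0 ≤ M i j) {n : ℕ} (σ : (Fin n → Fin b) → A)
    (c : A → ℕ) : 0 ≤ levelCensusKernel M b n σ c :=
  sum_nonneg fun τ _ => levelKernel_nonneg hnn σ τ

lemma sum_levelCensusKernel (hrow : ∀ i, ∑ j, M i j = 1) {n : ℕ} (σ : (Fin n → Fin b) → A) :
    ∑ c ∈ censusSupport A b (n + 1), levelCensusKernel M b n σ c = 1 := by
  simp only [levelCensusKernel]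
  rw [sum_fiberwise_of_maps_to fun τ _ => census_mem_censusSupport τ, sum_levelKernel hrow]

lemma censusDist_succ (i : A) (n : ℕ) (c : A → ℕ) :
    censusDist M b i (n + 1) c = ∑ σ, levelDist M b i n σ * levelCensusKernel M b n σ c := by
  simp_rw [censusDist_eq_sum_filter, levelCensusKernel, levelDist_succ, mul_sum]
  exact sum_comm

lemma levelCensusKernel_factorsThrough (n : ℕ) :
    (levelCensusKernel M b n).FactorsThrough census := by
  intro σ σ' h
  obtain ⟨π, rfl⟩ := exists_perm_comp_eq_of_census_eq h
  -- lift `π` to the next level by keeping the last step of each path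
  let Ψ : Equiv.Perm (Fin (n + 1) → Fin b) := (Fin.snocEquiv fun _ => Fin b).symm.trans
    ((Equiv.prodCongr (Equiv.refl _) π).trans (Fin.snocEquiv fun _ => Fin b))
  have hΨ : ∀ w, Fin.init (Ψ w) = π (Fin.init w) := fun w =>
    Fin.init_snoc (α := fun _ => Fin b) _ _
  have hker : ∀ τ, levelKernel M b n (σ ∘ π) (τ ∘ Ψ) = levelKernel M b n σ τ := fun τ => by
    rw [levelKernel, levelKernel, ← Equiv.prod_comp Ψ fun w => M (σ (Fin.init w)) (τ w)]
    simp [hΨ]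
  funext c
  simp only [levelCensusKernel, sum_filter]
  refine Fintype.sum_equiv (Equiv.arrowCongr Ψ.symm (Equiv.refl A)) _ _ fun τ => ?_
  have hcomp : Equiv.arrowCongr Ψ.symm (Equiv.refl A) τ = τ ∘ Ψ := rfl
  rw [hcomp, hker, census_comp_perm]

lemma censusTV_succ_le (hnn : ∀ i j, 0 ≤ M i j) (hrow : ∀ i, ∑ j, M i j = 1) (i j : A)
    (n : ℕ) : censusTV M b i j (n + 1) ≤ censusTV M b i j n := by
  set G := Function.extend census (levelCensusKernel M b n) 0
  have hG : ∀ σ, G (census σ) = levelCensusKernel M b n σ :=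
    (levelCensusKernel_factorsThrough n).extend_apply 0
  have hdist : ∀ l c', censusDist M b l (n + 1) c'
      = ∑ c ∈ censusSupport A b n, censusDist M b l n c * G c c' := fun l c' => by
    simp_rw [censusDist_succ, ← smul_eq_mul, sum_censusDist_smul l n fun c => G c c', hG]
  rw [censusTV_eq_sum, censusTV_eq_sum]
  gcongr
  simp_rw [hdist, ← sum_sub_distrib, ← sub_mul]
  refine sum_abs_sum_mul_le _ _ _ _ (fun c hc c' _ => ?_) fun c hc => ?_
  all_goals obtain ⟨σ, -, rfl⟩ := mem_image.1 hc
  · exact (hG σ).symm ▸ levelCensusKernel_nonneg hnn σ c'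
  · rw [hG, sum_levelCensusKernel hrow]

end Broadcast

open Broadcast in
theorem census_solvable_of_second_eigenvalue {A : Type} [Fintype A] [DecidableEq A]
    (M : A → A → ℝ) (hnn : ∀ i j, 0 ≤ M i j) (hrow : ∀ i, ∑ j, M i j = 1)
    (lam2 : ℂ) (heig : IsEigenvalue M lam2) (hne1 : lam2 ≠ 1)
    (b : ℕ) (h : 1 < (b : ℝ) * ‖lam2‖ ^ 2) :
    (∃ i j : A, ∃ L > 0, Tendsto (fun n => censusTV M b i j n) atTop (nhds L)) ∧
    (∃ i j : A, ∃ L > 0, Tendsto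
      (fun n => tvDist (levelDist M b i n) (levelDist M b j n)) atTop (nhds L)) := by
  obtain ⟨v, hv0, hv⟩ := heig
  obtain ⟨i, j, hij⟩ := exists_ne_of_eigenvector_of_ne_one hrow hv0 hv hne1
  obtain ⟨c, hc, hle⟩ := exists_pos_forall_le_censusTV hnn hrow hv h hij
  refine ⟨⟨i, j, exists_pos_tendsto_of_antitone ?_ hc hle⟩,
    ⟨i, j, exists_pos_tendsto_of_antitone ?_ hc fun n => (hle n).trans (censusTV_le_tvDist i j n)⟩⟩
  · exact antitone_nat_of_succ_le (censusTV_succ_le hnn hrow i j)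
  · exact antitone_nat_of_succ_le (tvDist_levelDist_succ_le hnn hrow i j)
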